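/- arXiv:2206.14284 — 2 statements merged into one kernel-verified Lean document; each statement's English description precedes it below -/
import Mathlib

section
/- Let P be a nonempty compact metric space, m, d ∈ ℕ, C ⊆ ℝ^m a nonempty compact set, π : P → ℝ^d a continuous map, and f : P × C → ℝ a continuous function. Assume that for every c ∈ C and every ε > 0 there exists a continuous function g : ℝ^d → ℝ such that sup_{x ∈ P} |f(x, c) − g(π(x))| < ε. Then for every ε > 0 there exists a continuous function f̃ : ℝ^d × ℝ^m → ℝ such that sup_{(x,c) ∈ P × C} |f(x, c) − f̃(π(x), c)| < ε. -/
open Metric Finset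

/-- Abstract form of the paper's Proposition 3.2: if every slice `f(·, c)` of a jointly
continuous function on `P × C` can be uniformly approximated by continuous functions of a
fixed continuous feature map `π`, then `f` can be uniformly approximated jointly by a single
continuous function of `(π(x), c)`. -/
theorem stmt3 {P : Type*} [MetricSpace P] [CompactSpace P] [Nonempty P]
    (m d : ℕ) (C : Set (Fin m → ℝ)) (hC : IsCompact C) (hCne : C.Nonempty)
    (π : P → (Fin d → ℝ)) (hπ : Continuous π)
    (f : P × C → ℝ) (hf : Continuous f)
    (happrox : ∀ c : C, ∀ ε : ℝ, 0 < ε → ∃ g : (Fin d → ℝ) → ℝ, Continuous g ∧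
      ∀ x : P, |f (x, c) - g (π x)| < ε) :
    ∀ ε : ℝ, 0 < ε →
      ∃ ftilde : (Fin d → ℝ) × (Fin m → ℝ) → ℝ, Continuous ftilde ∧
        ∀ (x : P) (c : C), |f (x, c) - ftilde (π x, (c : Fin m → ℝ))| < ε := by
  intro ε hε
  have hcs : CompactSpace C := isCompact_iff_compactSpace.mp hC
  have huc : UniformContinuous f := CompactSpace.uniformContinuous_of_continuous hf
  rw [Metric.uniformContinuous_iff] at huc
  obtain ⟨δ, hδ, hδf⟩ := huc (ε / 3) (by positivity)
  choose g hgc hgb using fun i : C => happrox i (ε / 3) (by positivity)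
  obtain ⟨t, ht⟩ := hC.elim_finite_subcover (fun i : C => ball (i : Fin m → ℝ) δ)
    (fun i => isOpen_ball)
    (fun c hc => Set.mem_iUnion.mpr ⟨⟨c, hc⟩, by simpa [mem_ball] using hδ⟩)
  set ψ : C → (Fin m → ℝ) → ℝ := fun i c => max (δ - dist c (i : Fin m → ℝ)) 0 with hψdef
  have hψc : ∀ i : C, Continuous (ψ i) := fun i =>
    (continuous_const.sub (continuous_id.dist continuous_const)).max continuous_const
  have hψ0 : ∀ (i : C) (c : Fin m → ℝ), 0 ≤ ψ i c := fun i c => le_max_right _ _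
  set D : (Fin m → ℝ) → ℝ := fun c => (∑ i ∈ t, ψ i c) + infDist c C with hDdef
  have hDc : Continuous D :=
    (continuous_finset_sum t fun i _ => hψc i).add (continuous_infDist_pt C)
  have hDpos : ∀ c, 0 < D c := by
    intro c
    by_cases hc : c ∈ C
    · obtain ⟨i, hit, hci⟩ := Set.mem_iUnion₂.mp (ht hc)
      have h1 : 0 < ψ i c := lt_max_of_lt_left (by have := mem_ball.mp hci; linarith)
      have h2 : ψ i c ≤ ∑ j ∈ t, ψ j c :=
        Finset.single_le_sum (fun j _ => hψ0 j c) hit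
      have h3 : (0:ℝ) ≤ infDist c C := infDist_nonneg
      simp only [hDdef]
      linarith
    · have h1 : 0 < infDist c C := by
        rw [← hC.isClosed.notMem_iff_infDist_pos hCne]
        exact hc
      have h2 : (0:ℝ) ≤ ∑ j ∈ t, ψ j c :=
        Finset.sum_nonneg fun j _ => hψ0 j c
      simp only [hDdef]
      linarith
  refine ⟨fun p => (∑ i ∈ t, ψ i p.2 * g i p.1) / D p.2, ?_, ?_⟩
  · exact (continuous_finset_sum t fun i _ =>
      ((hψc i).comp continuous_snd).mul ((hgc i).comp continuous_fst)).div
      (hDc.comp continuous_snd) (fun p => (hDpos p.2).ne')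
  · intro x c
    have hS0 : infDist (c : Fin m → ℝ) C = 0 := infDist_zero_of_mem c.2
    have hDS : D (c : Fin m → ℝ) = ∑ i ∈ t, ψ i (c : Fin m → ℝ) := by
      simp [hDdef, hS0]
    set S := ∑ i ∈ t, ψ i (c : Fin m → ℝ) with hSdef
    have hSpos : 0 < S := lt_of_lt_of_eq (hDpos _) hDS
    have key : f (x, c) - (∑ i ∈ t, ψ i (c : Fin m → ℝ) * g i (π x)) / D (c : Fin m → ℝ)
        = (∑ i ∈ t, ψ i (c : Fin m → ℝ) * (f (x, c) - g i (π x))) / S := by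
      rw [hDS]
      simp only [mul_sub]
      rw [Finset.sum_sub_distrib, ← Finset.sum_mul, sub_div,
        mul_div_cancel_left₀ _ hSpos.ne']
    rw [key]
    have hterm : ∀ i ∈ t, |ψ i (c : Fin m → ℝ) * (f (x, c) - g i (π x))|
        ≤ ψ i (c : Fin m → ℝ) * (2 * ε / 3) := by
      intro i hit
      rw [abs_mul, abs_of_nonneg (hψ0 i _)]
      rcases eq_or_lt_of_le (hψ0 i (c : Fin m → ℝ)) with h0 | h0
      · rw [← h0]; simp
      · have hd : dist (c : Fin m → ℝ) (i : Fin m → ℝ) < δ := by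
          by_contra hcon
          push_neg at hcon
          have : ψ i (c : Fin m → ℝ) = 0 := max_eq_right (by linarith)
          linarith
      -- distance in P × C
        have hdist : dist ((x, c) : P × C) ((x, i) : P × C) < δ := by
          rw [Prod.dist_eq]
          refine max_lt (by simpa using hδ) ?_
          rw [Subtype.dist_eq]
          exact hd
        have h1 : |f (x, c) - f (x, i)| < ε / 3 := by
          have := hδf hdist
          rwa [Real.dist_eq] at this
        have h2 : |f (x, i) - g i (π x)| < ε / 3 := hgb i x
        have h3 : |f (x, c) - g i (π x)| ≤ 2 * ε / 3 := by
          calc |f (x, c) - g i (π x)|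
              ≤ |f (x, c) - f (x, i)| + |f (x, i) - g i (π x)| := abs_sub_le _ _ _
            _ ≤ 2 * ε / 3 := by linarith
        exact mul_le_mul_of_nonneg_left h3 (hψ0 i _)
    calc |(∑ i ∈ t, ψ i (c : Fin m → ℝ) * (f (x, c) - g i (π x))) / S|
        = |∑ i ∈ t, ψ i (c : Fin m → ℝ) * (f (x, c) - g i (π x))| / S := by
          rw [abs_div, abs_of_pos hSpos]
      _ ≤ (∑ i ∈ t, ψ i (c : Fin m → ℝ) * (2 * ε / 3)) / S := by
          gcongr
          exact (Finset.abs_sum_le_sum_abs _ _).trans (Finset.sum_le_sum hterm)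
      _ = S * (2 * ε / 3) / S := by rw [← Finset.sum_mul, hSdef]
      _ = 2 * ε / 3 := mul_div_cancel_left₀ _ hSpos.ne'
      _ < ε := by linarith
end

section
/- Fix N ∈ ℕ, N ≥ 1, and let A_N be the set of all continuous functions f : [0,1] → ℝ with f(0) = 0 for which there exist k ≤ N, a partition 0 = t₀ < t₁ < ⋯ < t_k = 1 and slopes a₁, …, a_k ∈ [−N, N] such that f is affine with slope a_i on each interval [t_{i−1}, t_i]. Then A_N is totally bounded in the variation metric: for every ε > 0 there exists a finite subset F ⊆ A_N such that for every f ∈ A_N there is g ∈ F with Var_{[0,1]}(f − g) < ε, where Var_{[0,1]}(h) denotes the total variation of h on [0,1]. -/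
/-!
Every `f ∈ A_N` agrees on `[0,1]`, up to an additive constant, with a sum `∑ cᵢ • hinge tᵢ tᵢ₊₁`
of `N` hinges (slope `1` on `[tᵢ, tᵢ₊₁]`, flat elsewhere) with breakpoints `tᵢ ∈ [0,1]` and
slopes `|cᵢ| ≤ N`. A hinge is a difference of two ramps `x ↦ max x p`, and two ramps differ by a
monotone function of variation `|p - p'|`; hence the map from the compact parameter box to
functions is Lipschitz for the variation pseudometric. Its image is totally bounded, so is its
closure, which contains `A_N` (the additive constants cost no variation), and a finite `ε`-net
can then be chosen inside `A_N`.
-/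

/-- The family `A_N` of continuous piecewise linear functions on `[0,1]` starting at `0`,
with at most `N` pieces and slopes bounded by `N` in absolute value. -/
def piecewiseLinearSet (N : ℕ) : Set (ℝ → ℝ) :=
  {f | ContinuousOn f (Set.Icc 0 1) ∧ f 0 = 0 ∧
    ∃ k : ℕ, 1 ≤ k ∧ k ≤ N ∧
      ∃ t : ℕ → ℝ, t 0 = 0 ∧ t k = 1 ∧ (∀ i < k, t i < t (i + 1)) ∧
        ∃ a : ℕ → ℝ, (∀ i < k, |a i| ≤ (N : ℝ)) ∧
          ∀ i < k, ∀ s ∈ Set.Icc (t i) (t (i + 1)), f s = f (t i) + a i * (s - t i)}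

open Set
open scoped ENNReal NNReal

section

variable {α E : Type*} [LinearOrder α] [SeminormedAddCommGroup E]

theorem eVariationOn_const (c : E) (s : Set α) : eVariationOn (fun _ => c) s = 0 :=
  eVariationOn.constant_on ((subsingleton_singleton (a := c)).anti
    (image_subset_iff.2 fun _ _ => rfl))

theorem eVariationOn_add_const (f : α → E) (c : E) (s : Set α) :
    eVariationOn (f + fun _ => c) s = eVariationOn f s := by
  simp only [eVariationOn, Pi.add_apply, edist_add_right]

theorem eVariationOn_neg (f : α → E) (s : Set α) : eVariationOn (-f) s = eVariationOn f s := by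
  simp only [eVariationOn, Pi.neg_apply, edist_neg_neg]

theorem eVariationOn_add_le (f g : α → E) (s : Set α) :
    eVariationOn (f + g) s ≤ eVariationOn f s + eVariationOn g s := by
  refine iSup_le fun ⟨n, u, hu, us⟩ => ?_
  calc ∑ i ∈ Finset.range n, edist ((f + g) (u (i + 1))) ((f + g) (u i))
      ≤ ∑ i ∈ Finset.range n,
          (edist (f (u (i + 1))) (f (u i)) + edist (g (u (i + 1))) (g (u i))) :=
        Finset.sum_le_sum fun i _ => edist_add_add_le _ _ _ _
    _ ≤ eVariationOn f s + eVariationOn g s := by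
        rw [Finset.sum_add_distrib]
        exact add_le_add (eVariationOn.sum_le hu us) (eVariationOn.sum_le hu us)

theorem eVariationOn_sub_le (f g : α → E) (s : Set α) :
    eVariationOn (f - g) s ≤ eVariationOn f s + eVariationOn g s := by
  simpa [sub_eq_add_neg, eVariationOn_neg] using eVariationOn_add_le f (-g) s

theorem eVariationOn_sum_le {ι : Type*} (t : Finset ι) (f : ι → α → E) (s : Set α) :
    eVariationOn (∑ i ∈ t, f i) s ≤ ∑ i ∈ t, eVariationOn (f i) s := by
  classical
  induction t using Finset.induction_on with
  | empty =>
    rw [Finset.sum_empty, Finset.sum_empty]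
    exact (eVariationOn_const (0 : E) s).le
  | insert i t hi ih =>
    rw [Finset.sum_insert hi, Finset.sum_insert hi]
    exact (eVariationOn_add_le _ _ s).trans (add_le_add le_rfl ih)

theorem eVariationOn_const_smul_le {F : Type*} [NormedAddCommGroup F] [NormedSpace ℝ F]
    (c : ℝ) (f : α → F) (s : Set α) : eVariationOn (c • f) s ≤ ‖c‖ₑ * eVariationOn f s := by
  have := eVariationOn_smul_le (f := fun _ => c) (g := f) (s := s) (D := ⊤)
    (fun _ _ => le_rfl) (fun _ _ => le_top)
  rwa [eVariationOn_const, mul_zero, add_zero] at this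

end

/-- Functions `α → E` with the extended pseudometric `(f, g) ↦ eVariationOn (f - g) s`; a type
synonym, since `α → E` already carries the product uniformity. -/
def WithVariation {α : Type*} (_s : Set α) (E : Type*) : Type _ := α → E

namespace WithVariation

variable {α E : Type*} [LinearOrder α] [SeminormedAddCommGroup E] {s : Set α}

def ofFun (s : Set α) : (α → E) ≃ WithVariation s E := Equiv.refl _

noncomputable instance : PseudoEMetricSpace (WithVariation s E) where
  edist f g := eVariationOn ((ofFun s).symm f - (ofFun s).symm g) s
  edist_self f := by rw [sub_self]; exact eVariationOn_const (0 : E) s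
  edist_comm f g := by rw [← eVariationOn_neg, neg_sub]
  edist_triangle f g h := by
    rw [← sub_add_sub_cancel _ ((ofFun s).symm g)]
    exact eVariationOn_add_le _ _ s

theorem edist_ofFun (f g : α → E) : edist (ofFun s f) (ofFun s g) = eVariationOn (f - g) s :=
  rfl

theorem exists_finset_eVariationOn_sub_lt {A : Set (α → E)}
    (hA : TotallyBounded (ofFun s '' A)) {ε : ℝ≥0∞} (hε : 0 < ε) :
    ∃ F : Finset (α → E), ↑F ⊆ A ∧ ∀ f ∈ A, ∃ g ∈ F, eVariationOn (f - g) s < ε := by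
  obtain ⟨T, hTA, hTfin, hcover⟩ := EMetric.totallyBounded_iff'.1 hA ε hε
  refine ⟨(hTfin.image (ofFun s).symm).toFinset, ?_, fun f hf => ?_⟩
  · rw [Finite.coe_toFinset]
    rintro _ ⟨_, hy, rfl⟩
    obtain ⟨g, hg, rfl⟩ := hTA hy
    simpa using hg
  · obtain ⟨y, hy, hfy⟩ := mem_iUnion₂.1 (hcover (mem_image_of_mem _ hf))
    refine ⟨(ofFun s).symm y, (Finite.mem_toFinset _).2 (mem_image_of_mem _ hy), ?_⟩
    rwa [← edist_ofFun, Equiv.apply_symm_apply]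

end WithVariation

open WithVariation

theorem eVariationOn_max_sub_max_le (p q a b : ℝ) :
    eVariationOn (fun x => max x p - max x q) (Icc a b) ≤ edist p q := by
  wlog hpq : p ≤ q generalizing p q
  · have hneg : (fun x => max x p - max x q) = -fun x => max x q - max x p := by
      ext x; simp
    rw [hneg, eVariationOn_neg, edist_comm]
    exact this q p (le_of_not_ge hpq)
  have hmono : Monotone fun x => max x p - max x q := by
    intro x y hxy
    simp only [max_def]
    split_ifs <;> linarith
  calc eVariationOn (fun x => max x p - max x q) (Icc a b)
      = eVariationOn (fun x => max x p - max x q) (univ ∩ Icc a b) := by rw [univ_inter]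
    _ ≤ ENNReal.ofReal (q - p) := by
        rw [(hmono.monotoneOn univ).eVariationOn_eq (mem_univ a) (mem_univ b)]
        apply ENNReal.ofReal_le_ofReal
        simp only [max_def]
        split_ifs <;> linarith
    _ = edist p q := by rw [edist_dist, Real.dist_eq, abs_sub_comm, abs_of_nonneg (by linarith)]

/-- For `p ≤ q` this is `x ↦ min (max x p) q - p`; written with ramps so that its variation
depends Lipschitz-continuously on `p` and `q` without any ordering assumption. -/
def hinge (p q x : ℝ) : ℝ := max x p - max x q + (q - p)

theorem hinge_of_le_left {p q x : ℝ} (hxp : x ≤ p) (hpq : p ≤ q) : hinge p q x = 0 := by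
  rw [hinge, max_eq_right hxp, max_eq_right (hxp.trans hpq)]; ring

theorem hinge_of_right_le {p q x : ℝ} (hpx : p ≤ x) (hqx : q ≤ x) : hinge p q x = q - p := by
  rw [hinge, max_eq_left hpx, max_eq_left hqx]; ring

theorem hinge_of_mem_Icc {p q x : ℝ} (hx : x ∈ Icc p q) : hinge p q x = x - p := by
  rw [hinge, max_eq_left hx.1, max_eq_right hx.2]; ring

theorem eVariationOn_hinge_le (p q a b : ℝ) : eVariationOn (hinge p q) (Icc a b) ≤ edist p q :=
  (eVariationOn_add_const (fun x => max x p - max x q) (q - p) _).trans_le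
    (eVariationOn_max_sub_max_le p q a b)

theorem eVariationOn_hinge_sub_hinge_le (p q p' q' a b : ℝ) :
    eVariationOn (hinge p q - hinge p' q') (Icc a b) ≤ edist p p' + edist q q' := by
  have h : hinge p q - hinge p' q'
      = ((fun x => max x p - max x p') - fun x => max x q - max x q')
        + fun _ => (q - p) - (q' - p') := by
    ext x; simp only [hinge, Pi.add_apply, Pi.sub_apply]; ring
  rw [h, eVariationOn_add_const]
  exact (eVariationOn_sub_le _ _ _).trans
    (add_le_add (eVariationOn_max_sub_max_le p p' a b) (eVariationOn_max_sub_max_le q q' a b))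

theorem eVariationOn_smul_hinge_sub_smul_hinge_le (c c' p q p' q' a b : ℝ) :
    eVariationOn (c • hinge p q - c' • hinge p' q') (Icc a b)
      ≤ ‖c - c'‖ₑ * edist p q + ‖c'‖ₑ * (edist p p' + edist q q') := by
  have hsplit : c • hinge p q - c' • hinge p' q'
      = (c - c') • hinge p q + c' • (hinge p q - hinge p' q') := by
    rw [smul_sub, sub_smul]; abel
  have h₁ := eVariationOn_const_smul_le (c - c') (hinge p q) (Icc a b)
  have h₂ := eVariationOn_const_smul_le c' (hinge p q - hinge p' q') (Icc a b)
  rw [hsplit]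
  refine (eVariationOn_add_le _ _ _).trans (add_le_add (h₁.trans ?_) (h₂.trans ?_))
  · gcongr; exact eVariationOn_hinge_le p q a b
  · gcongr; exact eVariationOn_hinge_sub_hinge_le p q p' q' a b

def hingeSum {n : ℕ} (t : Fin (n + 1) → ℝ) (c : Fin n → ℝ) : ℝ → ℝ :=
  ∑ i : Fin n, c i • hinge (t i.castSucc) (t i.succ)

theorem hingeSum_apply {n : ℕ} (t : Fin (n + 1) → ℝ) (c : Fin n → ℝ) (x : ℝ) :
    hingeSum t c x = ∑ i : Fin n, c i * hinge (t i.castSucc) (t i.succ) x := by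
  simp [hingeSum]

theorem lipschitzOnWith_hingeSum (n : ℕ) (C : ℝ≥0) (a b : ℝ) :
    LipschitzOnWith (n * (1 + 2 * C))
      (fun p : (Fin (n + 1) → ℝ) × (Fin n → ℝ) => ofFun (Icc a b) (hingeSum p.1 p.2))
      (Icc 0 1 ×ˢ Metric.closedBall 0 C) := by
  rintro ⟨t, c⟩ ⟨ht, -⟩ ⟨t', c'⟩ ⟨-, hc'⟩
  set δ := edist (t, c) (t', c')
  have hδt : ∀ i, edist (t i) (t' i) ≤ δ := fun i =>
    (edist_le_pi_edist t t' i).trans (le_max_left _ _)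
  have hδc : ∀ i, ‖c i - c' i‖ₑ ≤ δ := fun i => by
    rw [← edist_eq_enorm_sub]
    exact (edist_le_pi_edist c c' i).trans (le_max_right _ _)
  have ht1 : ∀ i j, edist (t i) (t j) ≤ 1 := fun i j => by
    have hti : t i ∈ Icc (0 : ℝ) 1 := ⟨ht.1 i, ht.2 i⟩
    have htj : t j ∈ Icc (0 : ℝ) 1 := ⟨ht.1 j, ht.2 j⟩
    rw [edist_dist, Real.dist_eq, ENNReal.ofReal_le_one, abs_sub_le_iff]
    constructor <;> linarith [hti.1, hti.2, htj.1, htj.2]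
  have hc'C : ∀ i, ‖c' i‖ₑ ≤ C := fun i => by
    rw [← ofReal_norm, ← ENNReal.ofReal_coe_nnreal]
    exact ENNReal.ofReal_le_ofReal
      ((norm_le_pi_norm c' i).trans (mem_closedBall_zero_iff.1 hc'))
  have hterm : ∀ i : Fin n, eVariationOn (c i • hinge (t i.castSucc) (t i.succ)
      - c' i • hinge (t' i.castSucc) (t' i.succ)) (Icc a b) ≤ (1 + 2 * C) * δ := fun i =>
    calc _ ≤ δ * 1 + C * (δ + δ) := by
          refine (eVariationOn_smul_hinge_sub_smul_hinge_le _ _ _ _ _ _ a b).trans ?_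
          gcongr
          exacts [hδc i, ht1 _ _, hc'C i, hδt _, hδt _]
      _ = (1 + 2 * C) * δ := by ring
  calc edist (ofFun (Icc a b) (hingeSum t c)) (ofFun (Icc a b) (hingeSum t' c'))
      = eVariationOn (∑ i : Fin n, (c i • hinge (t i.castSucc) (t i.succ)
          - c' i • hinge (t' i.castSucc) (t' i.succ))) (Icc a b) := by
        rw [edist_ofFun, hingeSum, hingeSum, Finset.sum_sub_distrib]
    _ ≤ ∑ _i : Fin n, (1 + 2 * C) * δ :=
        (eVariationOn_sum_le _ _ _).trans (Finset.sum_le_sum fun i _ => hterm i)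
    _ = ↑(n * (1 + 2 * C) : ℝ≥0) * δ := by
        rw [Finset.sum_const, Finset.card_univ, Fintype.card_fin, nsmul_eq_mul, ← mul_assoc]
        push_cast
        rfl

theorem eq_add_sum_hinge_of_affineOn {f : ℝ → ℝ} {k : ℕ} {t a : ℕ → ℝ}
    (ht : MonotoneOn t (Iic k))
    (hf : ∀ i < k, ∀ x ∈ Icc (t i) (t (i + 1)), f x = f (t i) + a i * (x - t i)) :
    ∀ x ∈ Icc (t 0) (t k),
      f x = f (t 0) + ∑ i ∈ Finset.range k, a i * hinge (t i) (t (i + 1)) x := by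
  induction k with
  | zero => intro x hx; simp [le_antisymm hx.2 hx.1]
  | succ k ih =>
    have hmono : ∀ {i j}, i ≤ j → j ≤ k + 1 → t i ≤ t j := fun hij hj =>
      ht (hij.trans hj) hj hij
    have ih' := ih (ht.mono (Iic_subset_Iic.2 k.le_succ)) fun i hi => hf i (by omega)
    intro x hx
    rw [Finset.sum_range_succ]
    rcases le_total x (t k) with hxk | hkx
    · rw [hinge_of_le_left hxk (hmono k.le_succ le_rfl), mul_zero, add_zero]
      exact ih' x ⟨hx.1, hxk⟩
    · have hsum : ∀ i ∈ Finset.range k, a i * hinge (t i) (t (i + 1)) x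
          = a i * hinge (t i) (t (i + 1)) (t k) := fun i hi => by
        have hi := Finset.mem_range.1 hi
        have hik : t i ≤ t k := hmono hi.le k.le_succ
        have hi1k : t (i + 1) ≤ t k := hmono hi k.le_succ
        rw [hinge_of_right_le hik hi1k, hinge_of_right_le (hik.trans hkx) (hi1k.trans hkx)]
      rw [Finset.sum_congr rfl hsum, hinge_of_mem_Icc ⟨hkx, hx.2⟩,
        hf k k.lt_succ_self x ⟨hkx, hx.2⟩, ih' (t k) ⟨hmono (Nat.zero_le k) k.le_succ, le_rfl⟩]
      ring

theorem hingeSum_extend_apply {N k : ℕ} (hk : k ≤ N) (t a : ℕ → ℝ) (x : ℝ) :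
    hingeSum (fun i : Fin (N + 1) => t (min i k))
        (fun i : Fin N => if (i : ℕ) < k then a i else 0) x
      = ∑ i ∈ Finset.range k, a i * hinge (t i) (t (i + 1)) x := by
  simp only [hingeSum_apply, Fin.val_castSucc, Fin.val_succ]
  rw [Fin.sum_univ_eq_sum_range
    (fun i => (if i < k then a i else 0) * hinge (t (min i k)) (t (min (i + 1) k)) x)]
  refine (Finset.sum_subset (Finset.range_subset_range.2 hk) fun i _ hi => ?_).symm.trans ?_
  · rw [if_neg (by simpa using hi), zero_mul]
  · refine Finset.sum_congr rfl fun i hi => ?_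
    have hi := Finset.mem_range.1 hi
    rw [if_pos hi, min_eq_left hi.le, min_eq_left hi]

theorem exists_hingeSum_of_mem_piecewiseLinearSet {N : ℕ} {f : ℝ → ℝ}
    (hf : f ∈ piecewiseLinearSet N) :
    ∃ p ∈ Icc 0 1 ×ˢ Metric.closedBall (0 : Fin N → ℝ) N,
      ∀ x ∈ Icc (0 : ℝ) 1, f x = hingeSum p.1 p.2 x + f 0 := by
  obtain ⟨-, -, k, -, hkN, t, ht0, htk, hts, a, haN, haff⟩ := hf
  have ht : MonotoneOn t (Iic k) := (strictMonoOn_Iic_of_lt_succ hts).monotoneOn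
  refine ⟨⟨fun i : Fin (N + 1) => t (min i k), fun i : Fin N => if (i : ℕ) < k then a i else 0⟩,
    ⟨⟨fun i => ?_, fun i => ?_⟩, ?_⟩, fun x hx => ?_⟩
  · rw [Pi.zero_apply, ← ht0]
    exact ht (mem_Iic.2 (Nat.zero_le k)) (mem_Iic.2 (min_le_right _ _)) (Nat.zero_le _)
  · rw [Pi.one_apply, ← htk]
    exact ht (mem_Iic.2 (min_le_right _ _)) (mem_Iic.2 le_rfl) (min_le_right _ _)
  · refine mem_closedBall_zero_iff.2
      ((pi_norm_le_iff_of_nonneg (Nat.cast_nonneg N)).2 fun i => ?_)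
    dsimp only
    split_ifs with hi
    · exact haN i hi
    · simp
  · rw [← ht0, ← htk] at hx
    rw [hingeSum_extend_apply hkN, ← ht0, eq_add_sum_hinge_of_affineOn ht haff x hx]
    ring

theorem totallyBounded_piecewiseLinearSet (N : ℕ) :
    TotallyBounded (ofFun (Icc 0 1) '' piecewiseLinearSet N) := by
  set K := Icc (0 : Fin (N + 1) → ℝ) 1 ×ˢ Metric.closedBall (0 : Fin N → ℝ) (N : ℝ≥0)
  set Φ := fun p : (Fin (N + 1) → ℝ) × (Fin N → ℝ) => ofFun (Icc (0 : ℝ) 1) (hingeSum p.1 p.2)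
  have hK : IsCompact K := isCompact_Icc.prod (isCompact_closedBall _ _)
  refine ((hK.image_of_continuousOn
    (lipschitzOnWith_hingeSum N N 0 1).continuousOn).totallyBounded.closure).subset ?_
  rintro _ ⟨f, hf, rfl⟩
  obtain ⟨p, hpK, hfp⟩ := exists_hingeSum_of_mem_piecewiseLinearSet hf
  refine EMetric.mem_closure_iff.2 fun ε hε => ⟨Φ p, mem_image_of_mem Φ hpK, ?_⟩
  have hconst : eVariationOn (f - hingeSum p.1 p.2) (Icc 0 1) = 0 :=
    eVariationOn.constant_on ((subsingleton_singleton (a := f 0)).anti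
      (image_subset_iff.2 fun x hx => by simp [hfp x hx]))
  rwa [show Φ p = ofFun _ (hingeSum p.1 p.2) from rfl, edist_ofFun, hconst]

theorem stmt4_general (N : ℕ) :
    ∀ ε : ℝ, 0 < ε →
      ∃ F : Finset (ℝ → ℝ), (↑F : Set (ℝ → ℝ)) ⊆ piecewiseLinearSet N ∧
        ∀ f ∈ piecewiseLinearSet N, ∃ g ∈ F,
          eVariationOn (f - g) (Set.Icc 0 1) < ENNReal.ofReal ε := fun _ hε =>
  exists_finset_eVariationOn_sub_lt (totallyBounded_piecewiseLinearSet N)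
    (ENNReal.ofReal_pos.2 hε)

/-- `A_N` is totally bounded in the variation metric: for every `ε > 0` there is a finite
subset `F ⊆ A_N` such that every `f ∈ A_N` is within variation-distance `ε` of some `g ∈ F`. -/
theorem stmt4 (N : ℕ) (hN : 1 ≤ N) :
    ∀ ε : ℝ, 0 < ε →
      ∃ F : Finset (ℝ → ℝ), (↑F : Set (ℝ → ℝ)) ⊆ piecewiseLinearSet N ∧
        ∀ f ∈ piecewiseLinearSet N, ∃ g ∈ F,
          eVariationOn (f - g) (Set.Icc 0 1) < ENNReal.ofReal ε :=
  stmt4_general N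
end
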